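/- arXiv:0909.4464 — 2 statements merged into one kernel-verified Lean document; each statement's English description precedes it below -/
import Mathlib

section
/- Let σ ∈ {-1, 0, 1}. Define the action of g = [[a,b],[c,d]] ∈ SL(2,ℝ) on pairs (u,v) with v > 0 by g·(u,v) = (((au+b)(cu+d) - σ c a v²)/((cu+d)² - σ(cv)²), v/((cu+d)² - σ(cv)²)). Then this is a group action: (g₁g₂)·(u,v) = g₁·(g₂·(u,v)) whenever the denominators are nonzero. -/
/-!
Write `g·p = (N_g(p) / D_g(p), p.2 / D_g(p))`. For `D := D_{g₂}(p) ≠ 0`, the numerator and the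
denominator of `g₁` at `g₂·p` are those of `g₁ g₂` at `p`, divided by `D`: after clearing `D`
these are polynomial identities that hold modulo `(det g₂)² - 1`. Hence `D` cancels in both
coordinates of `g₁·(g₂·p)`.
-/

open Matrix

/-- The `σ`-parametrised action of a 2×2 matrix on the upper half-plane. -/
noncomputable def sl2Act (σ : ℝ) (g : Matrix (Fin 2) (Fin 2) ℝ) (p : ℝ × ℝ) : ℝ × ℝ :=
  (((g 0 0 * p.1 + g 0 1) * (g 1 0 * p.1 + g 1 1) - σ * g 1 0 * g 0 0 * p.2 ^ 2) /
      ((g 1 0 * p.1 + g 1 1) ^ 2 - σ * (g 1 0 * p.2) ^ 2),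
    p.2 / ((g 1 0 * p.1 + g 1 1) ^ 2 - σ * (g 1 0 * p.2) ^ 2))

/-- The denominator of the `σ`-action. -/
def sl2Denom (σ : ℝ) (g : Matrix (Fin 2) (Fin 2) ℝ) (p : ℝ × ℝ) : ℝ :=
  (g 1 0 * p.1 + g 1 1) ^ 2 - σ * (g 1 0 * p.2) ^ 2

def sl2Num (σ : ℝ) (g : Matrix (Fin 2) (Fin 2) ℝ) (p : ℝ × ℝ) : ℝ :=
  (g 0 0 * p.1 + g 0 1) * (g 1 0 * p.1 + g 1 1) - σ * g 1 0 * g 0 0 * p.2 ^ 2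

theorem sl2Act_eq (σ : ℝ) (g : Matrix (Fin 2) (Fin 2) ℝ) (p : ℝ × ℝ) :
    sl2Act σ g p = (sl2Num σ g p / sl2Denom σ g p, p.2 / sl2Denom σ g p) :=
  rfl

theorem sl2Act_snd (σ : ℝ) (g : Matrix (Fin 2) (Fin 2) ℝ) (p : ℝ × ℝ) :
    (sl2Act σ g p).2 = p.2 / sl2Denom σ g p :=
  rfl

section

variable {σ : ℝ} (g₁ : Matrix (Fin 2) (Fin 2) ℝ) {g₂ : Matrix (Fin 2) (Fin 2) ℝ} {p : ℝ × ℝ}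

theorem sl2Denom_sl2Act (hg₂ : g₂.det ^ 2 = 1) (hp : sl2Denom σ g₂ p ≠ 0) :
    sl2Denom σ g₁ (sl2Act σ g₂ p) = sl2Denom σ (g₁ * g₂) p / sl2Denom σ g₂ p := by
  rw [det_fin_two] at hg₂
  rw [sl2Act_eq, eq_div_iff hp, sl2Denom]
  set D := sl2Denom σ g₂ p with hD
  set N := sl2Num σ g₂ p with hN
  field_simp
  rw [hD, hN]
  simp only [sl2Denom, sl2Num, mul_apply, Fin.sum_univ_two]
  linear_combination σ * p.2 ^ 2 * g₁ 1 0 ^ 2 * hg₂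

theorem sl2Num_sl2Act (hg₂ : g₂.det ^ 2 = 1) (hp : sl2Denom σ g₂ p ≠ 0) :
    sl2Num σ g₁ (sl2Act σ g₂ p) = sl2Num σ (g₁ * g₂) p / sl2Denom σ g₂ p := by
  rw [det_fin_two] at hg₂
  rw [sl2Act_eq, eq_div_iff hp, sl2Num]
  set D := sl2Denom σ g₂ p with hD
  set N := sl2Num σ g₂ p with hN
  field_simp
  rw [hD, hN]
  simp only [sl2Denom, sl2Num, mul_apply, Fin.sum_univ_two]
  linear_combination σ * g₁ 0 0 * g₁ 1 0 * p.2 ^ 2 * hg₂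

end

theorem sl2Act_mul_general (σ : ℝ)
    (g₁ g₂ : Matrix.SpecialLinearGroup (Fin 2) ℝ) (u v : ℝ)
    (h₂ : sl2Denom σ (g₂ : Matrix (Fin 2) (Fin 2) ℝ) (u, v) ≠ 0) :
    sl2Act σ ((g₁ * g₂ : Matrix.SpecialLinearGroup (Fin 2) ℝ) :
        Matrix (Fin 2) (Fin 2) ℝ) (u, v) =
      sl2Act σ (g₁ : Matrix (Fin 2) (Fin 2) ℝ)
        (sl2Act σ (g₂ : Matrix (Fin 2) (Fin 2) ℝ) (u, v)) := by
  have hdet : (g₂ : Matrix (Fin 2) (Fin 2) ℝ).det ^ 2 = 1 := by rw [g₂.prop, one_pow]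
  rw [sl2Act_eq σ g₁, sl2Num_sl2Act _ hdet h₂, sl2Denom_sl2Act _ hdet h₂, sl2Act_snd,
    div_div_div_cancel_right₀ h₂, div_div_div_cancel_right₀ h₂]
  rfl

/-- The `σ`-parametrised formula defines a group action of `SL(2,ℝ)`
wherever the denominators do not vanish. -/
theorem sl2Act_mul (σ : ℝ) (hσ : σ ∈ ({-1, 0, 1} : Set ℝ))
    (g₁ g₂ : Matrix.SpecialLinearGroup (Fin 2) ℝ) (u v : ℝ) (hv : 0 < v)
    (h₂ : sl2Denom σ (g₂ : Matrix (Fin 2) (Fin 2) ℝ) (u, v) ≠ 0)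
    (h₁ : sl2Denom σ (g₁ : Matrix (Fin 2) (Fin 2) ℝ)
      (sl2Act σ (g₂ : Matrix (Fin 2) (Fin 2) ℝ) (u, v)) ≠ 0)
    (h₁₂ : sl2Denom σ ((g₁ * g₂ : Matrix.SpecialLinearGroup (Fin 2) ℝ) :
      Matrix (Fin 2) (Fin 2) ℝ) (u, v) ≠ 0) :
    sl2Act σ ((g₁ * g₂ : Matrix.SpecialLinearGroup (Fin 2) ℝ) :
        Matrix (Fin 2) (Fin 2) ℝ) (u, v) =
      sl2Act σ (g₁ : Matrix (Fin 2) (Fin 2) ℝ)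
        (sl2Act σ (g₂ : Matrix (Fin 2) (Fin 2) ℝ) (u, v)) :=
  sl2Act_mul_general σ g₁ g₂ u v h₂
end

section
/- In the algebra ℝ[ι] where ι² = σ with σ ∈ {-1,0,1}, the map (u,v) ↦ u + ιv intertwines the σ-parametrised SL(2,ℝ) action ((au+b)(cu+d) - σcav², v)/((cu+d)² - σ(cv)²) with the Möbius transformation w ↦ (aw+b)/(cw+d), i.e. if w = u + ιv then (aw+b)(cw+d)⁻¹ = u' + ιv' where (u',v') is the image of (u,v), provided (cw+d) is invertible. -/
open Matrix

/-! Both identities come from multiplying by the conjugate `(cu + d) - ι(cv)` of `cw + d`: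
their product is the real number `(cu+d)² - σ(cv)²`, and in the numerator the `ι`-part
`(au+b)(-cv) + av(cu+d)` collapses to `(ad - bc)v = v`. -/

/-- Multiplication in the algebra `ℝ[ι]` with `ι² = σ`, written in coordinates:
`(u + ιv)(u' + ιv') = (uu' + σ v v') + ι (u v' + v u')`. -/
def hcMul (σ : ℝ) (p q : ℝ × ℝ) : ℝ × ℝ :=
  (p.1 * q.1 + σ * p.2 * q.2, p.1 * q.2 + p.2 * q.1)

theorem Prod.mk_div_div {K : Type*} [Field K] (x y r : K) : (x / r, y / r) = r⁻¹ • (x, y) := by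
  simp only [Prod.smul_mk, smul_eq_mul, div_eq_inv_mul]

theorem hcMul_smul_right (σ r : ℝ) (p q : ℝ × ℝ) :
    hcMul σ p (r • q) = r • hcMul σ p q := by
  simp only [hcMul, Prod.smul_mk, Prod.smul_fst, Prod.smul_snd, smul_eq_mul]
  congr 1 <;> ring

theorem hcMul_conj (σ x y : ℝ) : hcMul σ (x, y) (x, -y) = (x ^ 2 - σ * y ^ 2, 0) := by
  simp only [hcMul, Prod.mk.injEq]
  constructor <;> ring

theorem hcMul_mul_inv_norm {σ x y : ℝ} (hN : x ^ 2 - σ * y ^ 2 ≠ 0) :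
    hcMul σ (x, y) (x / (x ^ 2 - σ * y ^ 2), -y / (x ^ 2 - σ * y ^ 2)) = (1, 0) := by
  rw [Prod.mk_div_div, hcMul_smul_right, hcMul_conj, Prod.smul_mk, smul_eq_mul,
    inv_mul_cancel₀ hN, smul_zero]

theorem hcMul_moebius_numerator_conj {σ a b c d : ℝ} (hdet : a * d - b * c = 1) (u v : ℝ) :
    hcMul σ (a * u + b, a * v) (c * u + d, -(c * v)) =
      ((a * u + b) * (c * u + d) - σ * c * a * v ^ 2, v) := by
  simp only [hcMul, Prod.mk.injEq]
  constructor
  · ring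
  · linear_combination v * hdet

theorem moebius_eq_sl2Act_general (σ : ℝ)
    (g : Matrix.SpecialLinearGroup (Fin 2) ℝ) (u v : ℝ)
    (a b c d : ℝ) (ha : a = g.1 0 0) (hb : b = g.1 0 1) (hc : c = g.1 1 0)
    (hd : d = g.1 1 1)
    (hden : (c * u + d) ^ 2 - σ * (c * v) ^ 2 ≠ 0) :
    -- `(cw+d)⁻¹` really is the inverse of `cw + d`:
    hcMul σ (c * u + d, c * v)
        ((c * u + d) / ((c * u + d) ^ 2 - σ * (c * v) ^ 2),
         -(c * v) / ((c * u + d) ^ 2 - σ * (c * v) ^ 2)) = (1, 0) ∧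
    -- and `(aw+b)(cw+d)⁻¹ = u' + ι v'` with `(u',v')` given by the action formula:
    hcMul σ (a * u + b, a * v)
        ((c * u + d) / ((c * u + d) ^ 2 - σ * (c * v) ^ 2),
         -(c * v) / ((c * u + d) ^ 2 - σ * (c * v) ^ 2)) =
      (((a * u + b) * (c * u + d) - σ * c * a * v ^ 2) /
          ((c * u + d) ^ 2 - σ * (c * v) ^ 2),
        v / ((c * u + d) ^ 2 - σ * (c * v) ^ 2)) := by
  have hdet : a * d - b * c = 1 := by
    subst ha hb hc hd
    exact (det_fin_two g.1).symm.trans g.det_coe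
  refine ⟨hcMul_mul_inv_norm hden, ?_⟩
  rw [Prod.mk_div_div, hcMul_smul_right, hcMul_moebius_numerator_conj hdet, Prod.mk_div_div]

/-- The map `(u,v) ↦ u + ιv` intertwines the `σ`-parametrised `SL(2,ℝ)` action with the
Möbius transformation `w ↦ (aw + b)(cw + d)⁻¹` in `ℝ[ι]`, `ι² = σ`: writing the inverse
of `cw + d = (cu + d) + ι(cv)` as `((cu+d) - ι(cv))/((cu+d)² - σ(cv)²)`, the element
`(aw + b)(cw + d)⁻¹` has coordinates given by the action formula. -/
theorem moebius_eq_sl2Act (σ : ℝ) (hσ : σ ∈ ({-1, 0, 1} : Set ℝ))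
    (g : Matrix.SpecialLinearGroup (Fin 2) ℝ) (u v : ℝ)
    (a b c d : ℝ) (ha : a = g.1 0 0) (hb : b = g.1 0 1) (hc : c = g.1 1 0)
    (hd : d = g.1 1 1)
    (hden : (c * u + d) ^ 2 - σ * (c * v) ^ 2 ≠ 0) :
    -- `(cw+d)⁻¹` really is the inverse of `cw + d`:
    hcMul σ (c * u + d, c * v)
        ((c * u + d) / ((c * u + d) ^ 2 - σ * (c * v) ^ 2),
         -(c * v) / ((c * u + d) ^ 2 - σ * (c * v) ^ 2)) = (1, 0) ∧
    -- and `(aw+b)(cw+d)⁻¹ = u' + ι v'` with `(u',v')` given by the action formula: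
    hcMul σ (a * u + b, a * v)
        ((c * u + d) / ((c * u + d) ^ 2 - σ * (c * v) ^ 2),
         -(c * v) / ((c * u + d) ^ 2 - σ * (c * v) ^ 2)) =
      (((a * u + b) * (c * u + d) - σ * c * a * v ^ 2) /
          ((c * u + d) ^ 2 - σ * (c * v) ^ 2),
        v / ((c * u + d) ^ 2 - σ * (c * v) ^ 2)) :=
  moebius_eq_sl2Act_general σ g u v a b c d ha hb hc hd hden
end
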